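/- Let Ω be a locally compact, non-compact Hausdorff space, α an aperiodic homeomorphism of Ω, and w a continuous positive function on Ω such that w and w⁻¹ = 1/w are bounded, so that T̃_{α,w}(f) = w·(f∘α) is an invertible bounded linear operator on C₀(Ω). Then the following are equivalent: (1) T̃_{α,w} is topologically Cesàro hyper-transitive on C₀(Ω); (2) for every compact subset K of Ω there exists a strictly increasing sequence (n_k) of natural numbers such that lim_{k→∞} ( sup_{t∈K} n_k⁻¹·∏_{j=0}^{n_k−1} w(α^{j−n_k}(t)) ) = 0 = lim_{k→∞} ( sup_{t∈K} n_k·∏_{j=0}^{n_k−1} (w(α^j(t)))⁻¹ ). -/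

import Mathlib

/-!
With `Pₙ(t) = ∏_{j<n} w(αʲ t)` one has `(Tⁿ f)(t) = Pₙ(t) f(αⁿ t)`. Hence `n⁻¹ Tⁿ` multiplies the
value `f(s)` by `n⁻¹ Pₙ(α⁻ⁿ s)` (the first weight of the theorem), and a preimage `u` of `g`
under `Tⁿ` satisfies `n u(αⁿ t) = n Pₙ(t)⁻¹ g(t)` (the second weight).

If both weights are small on a compact `K` carrying compactly supported approximants `f`, `g`
of points of `O₁`, `O₂`, then `h = f + n u` is close to `f` and `n⁻¹ Tⁿ h = n⁻¹ Tⁿ f + g` is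
close to `g`. Conversely, take `φ` with compact support `L` and `φ = 1` on `K`, and `n` so large
that `αⁿ` moves `K ∪ L` off itself. If `f` and `n⁻¹ Tⁿ f` both lie within `δ` of `φ`, then at
the points `α⁻ⁿ t` and `αⁿ t` (`t ∈ K`) one function is `δ`-small while the other is
`(1 - δ)`-large at `t`, which bounds both weights at `t` by `2δ`.
-/

open scoped ZeroAtInfty
open Filter Finset

/-- A bounded linear operator `T` on a complex normed space is *topologically Cesàro
hyper-transitive* if for every pair of nonempty open subsets `O₁, O₂` there exists a
strictly increasing sequence `(n_k)` of (positive) natural numbers such that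
`n_k⁻¹ • T^{n_k}(O₁) ∩ O₂ ≠ ∅` for all `k`. -/
def IsCesaroHyperTransitive {E : Type*} [NormedAddCommGroup E] [NormedSpace ℂ E]
    (T : E →L[ℂ] E) : Prop :=
  ∀ O₁ O₂ : Set E, IsOpen O₁ → IsOpen O₂ → O₁.Nonempty → O₂.Nonempty →
    ∃ n : ℕ → ℕ, StrictMono n ∧ (∀ k, 1 ≤ n k) ∧
      ∀ k, ∃ f ∈ O₁, ((n k : ℂ))⁻¹ • (T ^ n k) f ∈ O₂

open scoped Topology
open Set Metric Function

namespace ZeroAtInftyContinuousMap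

variable {Ω β : Type*} [TopologicalSpace Ω] [NormedAddCommGroup β]

lemma norm_apply_le_norm (f : C₀(Ω, β)) (t : Ω) : ‖f t‖ ≤ ‖f‖ := by
  rw [← norm_toBCF_eq_norm]
  exact f.toBCF.norm_coe_le_norm t

lemma norm_le_of_forall_norm_apply_le {f : C₀(Ω, β)} {C : ℝ} (hC : 0 ≤ C)
    (h : ∀ t, ‖f t‖ ≤ C) : ‖f‖ ≤ C := by
  rw [← norm_toBCF_eq_norm]
  exact (BoundedContinuousFunction.norm_le hC).mpr h

lemma dist_apply_le_dist (f g : C₀(Ω, β)) (t : Ω) : dist (f t) (g t) ≤ dist f g :=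
  BoundedContinuousFunction.dist_coe_le_dist (f := f.toBCF) (g := g.toBCF) t

lemma norm_sub_lt_norm_apply_of_mem_ball {f φ : C₀(Ω, β)} {δ : ℝ} (hf : f ∈ ball φ δ) (t : Ω) :
    ‖φ t‖ - δ < ‖f t‖ := by
  have := (dist_apply_le_dist f φ t).trans_lt hf
  rw [dist_eq_norm] at this
  linarith [norm_sub_norm_le (φ t) (f t), norm_sub_rev (φ t) (f t)]

lemma norm_apply_lt_of_mem_ball {f φ : C₀(Ω, β)} {δ : ℝ} (hf : f ∈ ball φ δ) {t : Ω}
    (ht : φ t = 0) : ‖f t‖ < δ := by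
  simpa [ht] using (dist_apply_le_dist f φ t).trans_lt hf

lemma norm_le_mul_norm_of_forall_apply_eq {F g : C₀(Ω, ℂ)} {q : Ω → ℝ} {K : Set Ω} {ε : ℝ}
    (hε : 0 ≤ ε) (hq₀ : ∀ y, 0 ≤ q y) (hqK : ∀ y ∈ K, q y ≤ ε) (hg : ∀ y ∉ K, g y = 0)
    (hF : ∀ x, ∃ y, F x = q y * g y) : ‖F‖ ≤ ε * ‖g‖ := by
  refine norm_le_of_forall_norm_apply_le (by positivity) fun x => ?_
  obtain ⟨y, hy⟩ := hF x
  rw [hy, norm_mul, Complex.norm_real, Real.norm_of_nonneg (hq₀ y)]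
  by_cases hyK : y ∈ K
  · exact mul_le_mul (hqK y hyK) (g.norm_apply_le_norm y) (norm_nonneg _) hε
  · simpa [hg y hyK] using mul_nonneg hε (norm_nonneg g)

variable [LocallyCompactSpace Ω] [T2Space Ω]

lemma exists_hasCompactSupport_eqOn_one {K : Set Ω} (hK : IsCompact K) :
    ∃ φ : C₀(Ω, ℂ), HasCompactSupport φ ∧ EqOn φ 1 K ∧ ∀ t, ‖1 - φ t‖ ≤ 1 := by
  obtain ⟨φ, hφK, -, hφc, hφ01⟩ :=
    exists_continuous_one_zero_of_isCompact hK isClosed_empty (disjoint_empty K)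
  have hφc' : HasCompactSupport fun t => (φ t : ℂ) := hφc.comp_left Complex.ofReal_zero
  refine ⟨⟨⟨fun t => (φ t : ℂ), by fun_prop⟩, hφc'.is_zero_at_infty⟩, hφc', ?_, fun t => ?_⟩
  · intro t ht
    simp [hφK ht]
  · obtain ⟨h0, h1⟩ := hφ01 t
    change ‖1 - (φ t : ℂ)‖ ≤ 1
    rw [← Complex.ofReal_one, ← Complex.ofReal_sub, Complex.norm_real, Real.norm_eq_abs,
      abs_le]
    constructor <;> linarith

lemma exists_hasCompactSupport_dist_le (f : C₀(Ω, ℂ)) {ε : ℝ} (hε : 0 < ε) :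
    ∃ g : C₀(Ω, ℂ), HasCompactSupport g ∧ dist g f ≤ ε := by
  obtain ⟨K, hK, hfK⟩ : ∃ K, IsCompact K ∧ ∀ t ∉ K, ‖f t‖ < ε :=
    mem_cocompact.mp ((zero_at_infty f).norm.eventually_lt_const (by simpa using hε))
  obtain ⟨φ, hφc, hφK, hφ1⟩ := exists_hasCompactSupport_eqOn_one hK
  refine ⟨φ * f, by simpa only [coe_mul] using hφc.mul_right, ?_⟩
  rw [dist_comm, dist_eq_norm]
  refine norm_le_of_forall_norm_apply_le hε.le fun t => ?_
  have hsub : (f - φ * f) t = (1 - φ t) * f t := by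
    simp only [sub_apply, coe_mul, Pi.mul_apply]; ring
  rw [hsub, norm_mul]
  by_cases ht : t ∈ K
  · simp [hφK ht, hε.le]
  · exact (mul_le_of_le_one_left (norm_nonneg _) (hφ1 t)).trans (hfK t ht).le

end ZeroAtInftyContinuousMap

noncomputable section WeightedComposition

variable {Ω : Type*}

def weightProd (w : Ω → ℝ) (α : Ω → Ω) (n : ℕ) (t : Ω) : ℝ :=
  ∏ j ∈ range n, w (α^[j] t)

def cesaroInvWeight (w : Ω → ℝ) (α : Ω → Ω) (n : ℕ) (t : Ω) : ℝ :=
  n * ∏ j ∈ range n, (w (α^[j] t))⁻¹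

variable {w : Ω → ℝ}

lemma cesaroInvWeight_eq (α : Ω → Ω) (n : ℕ) (t : Ω) :
    cesaroInvWeight w α n t = n * (weightProd w α n t)⁻¹ := by
  rw [cesaroInvWeight, weightProd, prod_inv_distrib]

lemma cesaroInvWeight_nonneg (hw : ∀ t, 0 < w t) (α : Ω → Ω) (n : ℕ) (t : Ω) :
    0 ≤ cesaroInvWeight w α n t :=
  mul_nonneg (by positivity) (prod_nonneg fun j _ => (inv_pos.mpr (hw _)).le)

variable [TopologicalSpace Ω]

def cesaroWeight (w : Ω → ℝ) (α : Ω ≃ₜ Ω) (n : ℕ) (t : Ω) : ℝ :=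
  (n : ℝ)⁻¹ * ∏ j ∈ range n, w (α.symm^[n - j] t)

def IsWeightedComposition (T : C₀(Ω, ℂ) →L[ℂ] C₀(Ω, ℂ)) (w : Ω → ℝ) (α : Ω → Ω) : Prop :=
  ∀ f t, T f t = (w t : ℂ) * f (α t)

lemma Homeomorph.symm_iterate_iterate (α : Ω ≃ₜ Ω) (n : ℕ) (t : Ω) :
    α.symm^[n] (α^[n] t) = t :=
  LeftInverse.iterate α.symm_apply_apply n t

lemma Homeomorph.iterate_symm_iterate (α : Ω ≃ₜ Ω) (n : ℕ) (t : Ω) :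
    α^[n] (α.symm^[n] t) = t :=
  LeftInverse.iterate α.apply_symm_apply n t

lemma cesaroWeight_iterate (α : Ω ≃ₜ Ω) (n : ℕ) (t : Ω) :
    cesaroWeight w α n (α^[n] t) = (n : ℝ)⁻¹ * weightProd w α n t := by
  refine congrArg _ (prod_congr rfl fun j hj => congrArg w ?_)
  calc α.symm^[n - j] (α^[n] t) = α.symm^[n - j] (α^[n - j] (α^[j] t)) := by
        rw [← iterate_add_apply, Nat.sub_add_cancel (mem_range.mp hj).le]
    _ = α^[j] t := α.symm_iterate_iterate _ _

lemma cesaroWeight_nonneg (hw : ∀ t, 0 < w t) (α : Ω ≃ₜ Ω) (n : ℕ) (t : Ω) :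
    0 ≤ cesaroWeight w α n t :=
  mul_nonneg (by positivity) (prod_nonneg fun j _ => (hw _).le)

lemma continuous_cesaroWeight (hw : Continuous w) (α : Ω ≃ₜ Ω) (n : ℕ) :
    Continuous (cesaroWeight w α n) :=
  continuous_const.mul (continuous_finsetProd _ fun _ _ =>
    hw.comp (α.symm.continuous.iterate _))

lemma continuous_cesaroInvWeight (hw : Continuous w) (hw₀ : ∀ t, w t ≠ 0) {α : Ω → Ω}
    (hα : Continuous α) (n : ℕ) : Continuous (cesaroInvWeight w α n) :=
  continuous_const.mul (continuous_finsetProd _ fun _ _ =>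
    (hw.comp (hα.iterate _)).inv₀ fun _ => hw₀ _)

namespace IsWeightedComposition

variable {T : C₀(Ω, ℂ) →L[ℂ] C₀(Ω, ℂ)}

lemma pow_apply {α : Ω → Ω} (hT : IsWeightedComposition T w α) (n : ℕ) (f : C₀(Ω, ℂ))
    (t : Ω) : (T ^ n) f t = (weightProd w α n t : ℂ) * f (α^[n] t) := by
  induction n generalizing f with
  | zero => simp [weightProd]
  | succ n ih =>
    rw [pow_succ, mul_apply_eq_comp, ih, hT, weightProd, weightProd, prod_range_succ,
      iterate_succ_apply']
    push_cast
    ring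

lemma inv_smul_pow_apply {α : Ω ≃ₜ Ω} (hT : IsWeightedComposition T w α) (n : ℕ)
    (f : C₀(Ω, ℂ)) (t : Ω) :
    ((n : ℂ)⁻¹ • (T ^ n) f) t = (cesaroWeight w α n (α^[n] t) : ℂ) * f (α^[n] t) := by
  rw [ZeroAtInftyContinuousMap.smul_apply, hT.pow_apply, cesaroWeight_iterate, smul_eq_mul]
  push_cast
  ring

lemma smul_apply_iterate {α : Ω → Ω} (hT : IsWeightedComposition T w α)
    (hw : ∀ t, w t ≠ 0) (n : ℕ) (f : C₀(Ω, ℂ)) (t : Ω) :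
    ((n : ℂ) • f) (α^[n] t) = (cesaroInvWeight w α n t : ℂ) * (T ^ n) f t := by
  have hP : (weightProd w α n t : ℂ) ≠ 0 :=
    Complex.ofReal_ne_zero.mpr (prod_ne_zero_iff.mpr fun _ _ => hw _)
  rw [ZeroAtInftyContinuousMap.smul_apply, hT.pow_apply, cesaroInvWeight_eq, smul_eq_mul]
  push_cast
  field_simp

lemma exists_dist_le_of_cesaroWeight_le {α : Ω ≃ₜ Ω} (hT : IsWeightedComposition T w α)
    (hsurj : Surjective T) (hw : ∀ t, 0 < w t) {f g : C₀(Ω, ℂ)} {K : Set Ω}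
    (hf : ∀ t ∉ K, f t = 0) (hg : ∀ t ∉ K, g t = 0) {n : ℕ} (hn : n ≠ 0) {ε : ℝ} (hε : 0 ≤ ε)
    (hK : ∀ t ∈ K, cesaroWeight w α n t ≤ ε) (hK' : ∀ t ∈ K, cesaroInvWeight w α n t ≤ ε) :
    ∃ h, dist h f ≤ ε * ‖g‖ ∧ dist ((n : ℂ)⁻¹ • (T ^ n) h) g ≤ ε * ‖f‖ := by
  obtain ⟨u, hu⟩ : ∃ u, (T ^ n) u = g := by
    simpa only [pow_apply_eq_iterate] using hsurj.iterate n g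
  refine ⟨f + (n : ℂ) • u, ?_, ?_⟩
  · rw [dist_eq_norm, add_sub_cancel_left]
    refine ZeroAtInftyContinuousMap.norm_le_mul_norm_of_forall_apply_eq hε
      (cesaroInvWeight_nonneg hw α n) hK' hg
      fun x => ⟨α.symm^[n] x, ?_⟩
    have := hT.smul_apply_iterate (fun t => (hw t).ne') n u (α.symm^[n] x)
    rwa [α.iterate_symm_iterate, hu] at this
  · have hn' : (n : ℂ) ≠ 0 := Nat.cast_ne_zero.mpr hn
    have hcancel : (n : ℂ)⁻¹ • ((T ^ n) f + (n : ℂ) • g) - g = (n : ℂ)⁻¹ • (T ^ n) f := by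
      ext; simp [hn']
    rw [dist_eq_norm, map_add, map_smul, hu, hcancel]
    exact ZeroAtInftyContinuousMap.norm_le_mul_norm_of_forall_apply_eq hε
      (cesaroWeight_nonneg hw α n) hK hf
      fun x => ⟨α^[n] x, hT.inv_smul_pow_apply n f x⟩

lemma cesaroWeight_lt_of_mem_ball {α : Ω ≃ₜ Ω} (hT : IsWeightedComposition T w α)
    (hw : ∀ t, 0 < w t) {φ f : C₀(Ω, ℂ)} {K : Set Ω} (hφK : EqOn φ 1 K) {n : ℕ}
    (hn : ∀ u ∈ tsupport φ, α^[n] u ∉ K) {δ : ℝ} (hδ : δ ≤ 1 / 2) (hf : f ∈ ball φ δ)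
    (hTf : (n : ℂ)⁻¹ • (T ^ n) f ∈ ball φ δ) {t : Ω} (ht : t ∈ K) :
    cesaroWeight w α n t < 2 * δ := by
  have hu : α^[n] (α.symm^[n] t) = t := α.iterate_symm_iterate n t
  have h₁ := ZeroAtInftyContinuousMap.norm_apply_lt_of_mem_ball hTf
    (image_eq_zero_of_notMem_tsupport fun h => hn _ h (hu ▸ ht))
  have h₂ : 1 - δ < ‖f t‖ := by
    simpa [hφK ht] using ZeroAtInftyContinuousMap.norm_sub_lt_norm_apply_of_mem_ball hf t
  have hq := cesaroWeight_nonneg hw α n t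
  rw [hT.inv_smul_pow_apply, hu, norm_mul, Complex.norm_real, Real.norm_of_nonneg hq] at h₁
  nlinarith

lemma cesaroInvWeight_lt_of_mem_ball {α : Ω → Ω} (hT : IsWeightedComposition T w α)
    (hw : ∀ t, 0 < w t) {φ f : C₀(Ω, ℂ)} {K : Set Ω} (hφK : EqOn φ 1 K) {n : ℕ} (hn₀ : n ≠ 0)
    (hn : ∀ t ∈ K, α^[n] t ∉ tsupport φ) {δ : ℝ} (hδ : δ ≤ 1 / 2) (hf : f ∈ ball φ δ)
    (hTf : (n : ℂ)⁻¹ • (T ^ n) f ∈ ball φ δ) {t : Ω} (ht : t ∈ K) :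
    cesaroInvWeight w α n t < 2 * δ := by
  have h₁ := ZeroAtInftyContinuousMap.norm_apply_lt_of_mem_ball hf
    (image_eq_zero_of_notMem_tsupport (hn t ht))
  have h₂ : 1 - δ < ‖((n : ℂ)⁻¹ • (T ^ n) f) t‖ := by
    simpa [hφK ht] using ZeroAtInftyContinuousMap.norm_sub_lt_norm_apply_of_mem_ball hTf t
  have hq := cesaroInvWeight_nonneg hw α n t
  have hn' : (n : ℂ) ≠ 0 := Nat.cast_ne_zero.mpr hn₀
  have key : f (α^[n] t) = cesaroInvWeight w α n t * ((n : ℂ)⁻¹ • (T ^ n) f) t := by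
    have := hT.smul_apply_iterate (fun t => (hw t).ne') n f t
    rw [ZeroAtInftyContinuousMap.smul_apply, smul_eq_mul] at this ⊢
    rw [mul_left_comm, ← this, inv_mul_cancel_left₀ hn']
  rw [key, norm_mul, Complex.norm_real, Real.norm_of_nonneg hq] at h₁
  nlinarith

end IsWeightedComposition

end WeightedComposition

lemma isCesaroHyperTransitive_iff_frequently {E : Type*} [NormedAddCommGroup E]
    [NormedSpace ℂ E] {T : E →L[ℂ] E} :
    IsCesaroHyperTransitive T ↔ ∀ O₁ O₂ : Set E, IsOpen O₁ → IsOpen O₂ → O₁.Nonempty →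
      O₂.Nonempty → ∃ᶠ n : ℕ in atTop, ∃ f ∈ O₁, (n : ℂ)⁻¹ • (T ^ n) f ∈ O₂ := by
  refine forall₄_congr fun O₁ O₂ _ _ => forall₂_congr fun _ _ => ⟨?_, fun h => ?_⟩
  · rintro ⟨n, hn, -, hO⟩
    exact hn.tendsto_atTop.frequently (Frequently.of_forall hO)
  · obtain ⟨n, hn, hO⟩ :=
      extraction_of_frequently_atTop (h.and_eventually (eventually_ge_atTop 1))
    exact ⟨n, hn, fun k => (hO k).2, fun k => (hO k).1⟩

lemma exists_strictMono_tendsto_zero_iff_frequently_le {a b : ℕ → ℝ} (ha : 0 ≤ a)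
    (hb : 0 ≤ b) :
    (∃ n : ℕ → ℕ, StrictMono n ∧ (∀ k, 1 ≤ n k) ∧ Tendsto (fun k => a (n k)) atTop (𝓝 0) ∧
      Tendsto (fun k => b (n k)) atTop (𝓝 0)) ↔
    ∀ ε > 0, ∃ᶠ m in atTop, a m ≤ ε ∧ b m ≤ ε := by
  constructor
  · rintro ⟨n, hn, -, ha₀, hb₀⟩ ε hε
    exact hn.tendsto_atTop.frequently
      ((ha₀.eventually (ge_mem_nhds hε)).and (hb₀.eventually (ge_mem_nhds hε))).frequently
  · intro h
    obtain ⟨n, hn, hP⟩ := extraction_forall_of_frequently fun k =>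
      (h (1 / ((k : ℝ) + 1)) Nat.one_div_pos_of_nat).and_eventually (eventually_ge_atTop 1)
    exact ⟨n, hn, fun k => (hP k).2,
      squeeze_zero (fun k => ha _) (fun k => (hP k).1.1) tendsto_one_div_add_atTop_nhds_zero_nat,
      squeeze_zero (fun k => hb _) (fun k => (hP k).1.2) tendsto_one_div_add_atTop_nhds_zero_nat⟩

lemma sSup_image_le_iff_of_nonneg {X : Type*} {q : X → ℝ} {K : Set X} (hq : BddAbove (q '' K))
    {ε : ℝ} (hε : 0 ≤ ε) : sSup (q '' K) ≤ ε ↔ ∀ t ∈ K, q t ≤ ε :=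
  ⟨fun h _ ht => (le_csSup hq (mem_image_of_mem q ht)).trans h,
    fun h => Real.sSup_le (forall_mem_image.mpr h) hε⟩

lemma exists_pos_mul_lt_and_mul_lt (a b : ℝ) {c d : ℝ} (hc : 0 < c) (hd : 0 < d) :
    ∃ ε > 0, ε * a < c ∧ ε * b < d := by
  have hmul (x : ℝ) : Tendsto (fun ε : ℝ => ε * x) (𝓝[>] 0) (𝓝 0) := by
    simpa using ((continuous_mul_const x).tendsto 0).mono_left nhdsWithin_le_nhds
  exact (eventually_mem_nhdsWithin.and (((hmul a).eventually (gt_mem_nhds hc)).and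
    ((hmul b).eventually (gt_mem_nhds hd)))).exists

section WeightCondition

variable {Ω : Type*} [TopologicalSpace Ω]

def IsAperiodic (α : Ω → Ω) : Prop :=
  ∀ K : Set Ω, IsCompact K → ∃ N : ℕ, 0 < N ∧ ∀ n ≥ N, (α^[n] '' K) ∩ K = ∅

variable {w : Ω → ℝ} {α : Ω ≃ₜ Ω}

def CesaroWeightCondition (w : Ω → ℝ) (α : Ω ≃ₜ Ω) : Prop :=
  ∀ K : Set Ω, IsCompact K → ∀ ε > 0,
    ∃ᶠ n in atTop, (∀ t ∈ K, cesaroWeight w α n t ≤ ε) ∧ ∀ t ∈ K, cesaroInvWeight w α n t ≤ ε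

lemma cesaroWeightCondition_iff (hw_cont : Continuous w) (hw : ∀ t, 0 < w t) :
    CesaroWeightCondition w α ↔ ∀ K : Set Ω, IsCompact K → ∃ n : ℕ → ℕ, StrictMono n ∧
      (∀ k, 1 ≤ n k) ∧ Tendsto (fun k => sSup (cesaroWeight w α (n k) '' K)) atTop (𝓝 0) ∧
      Tendsto (fun k => sSup (cesaroInvWeight w α (n k) '' K)) atTop (𝓝 0) := by
  refine forall₂_congr fun K hK => Iff.symm ?_
  refine (exists_strictMono_tendsto_zero_iff_frequently_le
    (a := fun n => sSup (cesaroWeight w α n '' K))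
    (b := fun n => sSup (cesaroInvWeight w α n '' K))
    (fun n => Real.sSup_nonneg (forall_mem_image.mpr fun t _ => cesaroWeight_nonneg hw α n t))
    (fun n => Real.sSup_nonneg (forall_mem_image.mpr fun t _ =>
      cesaroInvWeight_nonneg hw α n t))).trans ?_
  refine forall₂_congr fun ε hε => frequently_congr (Eventually.of_forall fun n => ?_)
  rw [sSup_image_le_iff_of_nonneg
      (hK.image (continuous_cesaroWeight hw_cont α n)).bddAbove hε.le,
    sSup_image_le_iff_of_nonneg (hK.image (continuous_cesaroInvWeight hw_cont
      (fun t => (hw t).ne') α.continuous n)).bddAbove hε.le]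

namespace IsWeightedComposition

variable [LocallyCompactSpace Ω] [T2Space Ω] {T : C₀(Ω, ℂ) →L[ℂ] C₀(Ω, ℂ)}

lemma cesaroWeightCondition_of_isCesaroHyperTransitive (hT : IsWeightedComposition T w α)
    (hw : ∀ t, 0 < w t) (haper : IsAperiodic α) (hHT : IsCesaroHyperTransitive T) :
    CesaroWeightCondition w α := by
  intro K hK ε hε
  obtain ⟨φ, hφc, hφK, -⟩ := ZeroAtInftyContinuousMap.exists_hasCompactSupport_eqOn_one hK
  obtain ⟨N, -, hN⟩ := haper _ (hK.union hφc)
  have hout (n : ℕ) (hn : N ≤ n) (u : Ω) (hu : u ∈ K ∪ tsupport φ) :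
      α^[n] u ∉ K ∪ tsupport φ := fun hnu =>
    eq_empty_iff_forall_notMem.mp (hN n hn) _ ⟨mem_image_of_mem _ hu, hnu⟩
  obtain ⟨δ, hδ, hδ₁, hδε⟩ : ∃ δ > 0, δ ≤ 1 / 2 ∧ 2 * δ ≤ ε :=
    ⟨min ε 1 / 2, by positivity, by linarith [min_le_right ε 1], by linarith [min_le_left ε 1]⟩
  have hφ : φ ∈ ball φ δ := mem_ball_self hδ
  refine ((isCesaroHyperTransitive_iff_frequently.mp hHT _ _ isOpen_ball isOpen_ball ⟨φ, hφ⟩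
    ⟨φ, hφ⟩).and_eventually ((eventually_ge_atTop N).and (eventually_ne_atTop 0))).mono ?_
  rintro n ⟨⟨f, hf, hTf⟩, hnN, hn₀⟩
  exact ⟨fun t ht => (hT.cesaroWeight_lt_of_mem_ball hw hφK
      (fun u hu hnu => hout n hnN u (.inr hu) (.inl hnu)) hδ₁ hf hTf ht).le.trans hδε,
    fun t ht => (hT.cesaroInvWeight_lt_of_mem_ball hw hφK hn₀
      (fun t ht hnt => hout n hnN t (.inl ht) (.inr hnt)) hδ₁ hf hTf ht).le.trans hδε⟩

lemma isCesaroHyperTransitive_of_cesaroWeightCondition (hT : IsWeightedComposition T w α)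
    (hsurj : Surjective T) (hw : ∀ t, 0 < w t) (h : CesaroWeightCondition w α) :
    IsCesaroHyperTransitive T := by
  refine isCesaroHyperTransitive_iff_frequently.mpr fun O₁ O₂ hO₁ hO₂ ⟨f₀, hf₀⟩ ⟨g₀, hg₀⟩ => ?_
  obtain ⟨r₁, hr₁, hball₁⟩ := Metric.isOpen_iff.mp hO₁ f₀ hf₀
  obtain ⟨r₂, hr₂, hball₂⟩ := Metric.isOpen_iff.mp hO₂ g₀ hg₀
  obtain ⟨f, hfc, hf⟩ :=
    ZeroAtInftyContinuousMap.exists_hasCompactSupport_dist_le f₀ (half_pos hr₁)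
  obtain ⟨g, hgc, hg⟩ :=
    ZeroAtInftyContinuousMap.exists_hasCompactSupport_dist_le g₀ (half_pos hr₂)
  obtain ⟨ε, hε, hεg, hεf⟩ := exists_pos_mul_lt_and_mul_lt ‖g‖ ‖f‖ (half_pos hr₁) (half_pos hr₂)
  refine ((h _ (hfc.union hgc) ε hε).and_eventually (eventually_ne_atTop 0)).mono
    fun n ⟨⟨hK, hK'⟩, hn⟩ => ?_
  obtain ⟨u, hu, hTu⟩ := hT.exists_dist_le_of_cesaroWeight_le hsurj hw
    (fun t ht => image_eq_zero_of_notMem_tsupport fun h => ht (.inl h))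
    (fun t ht => image_eq_zero_of_notMem_tsupport fun h => ht (.inr h)) hn hε.le hK hK'
  refine ⟨u, hball₁ ?_, hball₂ ?_⟩
  · exact mem_ball.mpr (by linarith [dist_triangle u f f₀])
  · exact mem_ball.mpr (by linarith [dist_triangle ((n : ℂ)⁻¹ • (T ^ n) u) g g₀])

end IsWeightedComposition

end WeightCondition

theorem cesaro_hyper_transitive_iff_weight_condition_C0_general
    {Ω : Type*} [TopologicalSpace Ω] [LocallyCompactSpace Ω] [T2Space Ω]
    (α : Ω ≃ₜ Ω)
    (haper : ∀ K : Set Ω, IsCompact K →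
      ∃ N : ℕ, 0 < N ∧ ∀ n ≥ N, ((⇑α)^[n] '' K) ∩ K = ∅)
    (w : Ω → ℝ) (hw_cont : Continuous w) (hw_pos : ∀ t, 0 < w t)
    (T S : C₀(Ω, ℂ) →L[ℂ] C₀(Ω, ℂ))
    (hT : ∀ (f : C₀(Ω, ℂ)) (t : Ω), T f t = (w t : ℂ) * f (α t))
    (hTS : ∀ f, T (S f) = f) :
    IsCesaroHyperTransitive T ↔
      ∀ K : Set Ω, IsCompact K →
        ∃ n : ℕ → ℕ, StrictMono n ∧ (∀ k, 1 ≤ n k) ∧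
          Tendsto (fun k =>
              sSup ((fun t => ((n k : ℝ))⁻¹ *
                ∏ j ∈ range (n k), w ((⇑α.symm)^[n k - j] t)) '' K))
            atTop (nhds 0) ∧
          Tendsto (fun k =>
              sSup ((fun t => (n k : ℝ) *
                ∏ j ∈ range (n k), (w ((⇑α)^[j] t))⁻¹) '' K))
            atTop (nhds 0) := by
  have hT' : IsWeightedComposition T w α := hT
  refine Iff.trans ?_ (cesaroWeightCondition_iff hw_cont hw_pos)
  exact ⟨hT'.cesaroWeightCondition_of_isCesaroHyperTransitive hw_pos haper,
    hT'.isCesaroHyperTransitive_of_cesaroWeightCondition (fun f => ⟨S f, hTS f⟩) hw_pos⟩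

theorem cesaro_hyper_transitive_iff_weight_condition_C0
    {Ω : Type*} [TopologicalSpace Ω] [LocallyCompactSpace Ω] [T2Space Ω]
    [NoncompactSpace Ω]
    (α : Ω ≃ₜ Ω)
    (haper : ∀ K : Set Ω, IsCompact K →
      ∃ N : ℕ, 0 < N ∧ ∀ n ≥ N, ((⇑α)^[n] '' K) ∩ K = ∅)
    (w : Ω → ℝ) (hw_cont : Continuous w) (hw_pos : ∀ t, 0 < w t)
    (hw_bdd : ∃ C, ∀ t, w t ≤ C) (hw_inv_bdd : ∃ C, ∀ t, (w t)⁻¹ ≤ C)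
    (T S : C₀(Ω, ℂ) →L[ℂ] C₀(Ω, ℂ))
    (hT : ∀ (f : C₀(Ω, ℂ)) (t : Ω), T f t = (w t : ℂ) * f (α t))
    (hST : ∀ f, S (T f) = f) (hTS : ∀ f, T (S f) = f) :
    IsCesaroHyperTransitive T ↔
      ∀ K : Set Ω, IsCompact K →
        ∃ n : ℕ → ℕ, StrictMono n ∧ (∀ k, 1 ≤ n k) ∧
          Tendsto (fun k =>
              sSup ((fun t => ((n k : ℝ))⁻¹ *
                ∏ j ∈ range (n k), w ((⇑α.symm)^[n k - j] t)) '' K))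
            atTop (nhds 0) ∧
          Tendsto (fun k =>
              sSup ((fun t => (n k : ℝ) *
                ∏ j ∈ range (n k), (w ((⇑α)^[j] t))⁻¹) '' K))
            atTop (nhds 0) :=
  cesaro_hyper_transitive_iff_weight_condition_C0_general α haper w hw_cont hw_pos T S hT hTS
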